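/- Let n, m ≥ 1, let u, v ∈ ℝⁿ be nonzero vectors with uᵀv ≠ 0, let λ ∈ ℝ with λ ≠ 0, let f₁,…,f_m ∈ ℝ and weights w₁,…,w_m ≥ 0. Set cos θ = (uᵀv)/(‖u‖‖v‖) and β = sqrt((1 + cos²θ)/2). Consider the set S_sym^F = { |Σᵢ₌₁ᵐ fᵢ · (uᵀEᵢv)| / (|λ| · |uᵀv|) : E₁,…,E_m ∈ ℝ^{n×n} symmetric (Eᵢᵀ = Eᵢ) with ‖Eᵢ‖_F ≤ wᵢ for all i }. Then the greatest element of S_sym^F equals β · (Σᵢ₌₁ᵐ |fᵢ| wᵢ) · ‖u‖ · ‖v‖ / (|λ| · |uᵀv|): every element of S_sym^F is ≤ this value, and it is attained, e.g. by Eᵢ = sign(fᵢ) wᵢ (uvᵀ + vuᵀ)/(2β‖u‖‖v‖). -/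

import Mathlib

open Matrix

/-- Euclidean norm of a vector in `ℝⁿ`. -/
noncomputable def e2norm {n : ℕ} (v : Fin n → ℝ) : ℝ := Real.sqrt (∑ i, v i ^ 2)

/-- Frobenius norm of a real matrix. -/
noncomputable def frobNorm {n m : ℕ} (M : Matrix (Fin n) (Fin m) ℝ) : ℝ :=
  Real.sqrt (∑ i, ∑ j, M i j ^ 2)

/-- Spectral norm: the supremum of `‖M x‖` over Euclidean-unit vectors `x`. -/
noncomputable def specNorm {n m : ℕ} (M : Matrix (Fin n) (Fin m) ℝ) : ℝ :=
  sSup ((fun x => e2norm (M.mulVec x)) '' {x : Fin m → ℝ | e2norm x = 1})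

/-
For symmetric `E`, `uᵀEv` is the Frobenius inner product of `E` with the symmetric part
`S = (uvᵀ + vuᵀ)/2` of `uvᵀ`, so by Cauchy–Schwarz `|uᵀEᵢv| ≤ wᵢ ‖S‖_F`, and the triangle
inequality bounds the numerator by `(Σ |fᵢ| wᵢ) ‖S‖_F`. The bound is attained by
`Eᵢ = sign(fᵢ) wᵢ S / ‖S‖_F`, and `‖S‖_F² = (‖u‖²‖v‖² + (uᵀv)²)/2 = (β ‖u‖ ‖v‖)²`.
-/

lemma e2norm_sq {n : ℕ} (v : Fin n → ℝ) : e2norm v ^ 2 = v ⬝ᵥ v := by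
  rw [e2norm, Real.sq_sqrt (Finset.sum_nonneg fun i _ => sq_nonneg _)]
  simp only [dotProduct, sq]

lemma e2norm_pos {n : ℕ} {v : Fin n → ℝ} (hv : v ≠ 0) : 0 < e2norm v := by
  obtain ⟨i, hi⟩ := Function.ne_iff.mp hv
  exact Real.sqrt_pos.mpr <|
    Finset.sum_pos' (fun j _ => sq_nonneg _) ⟨i, Finset.mem_univ i, sq_pos_of_ne_zero hi⟩

lemma frobNorm_nonneg {n m : ℕ} (M : Matrix (Fin n) (Fin m) ℝ) : 0 ≤ frobNorm M :=
  Real.sqrt_nonneg _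

lemma frobNorm_sq {n m : ℕ} (M : Matrix (Fin n) (Fin m) ℝ) :
    frobNorm M ^ 2 = ∑ i, ∑ j, M i j ^ 2 :=
  Real.sq_sqrt (Finset.sum_nonneg fun _ _ => Finset.sum_nonneg fun _ _ => sq_nonneg _)

lemma frobNorm_smul {n m : ℕ} (c : ℝ) (M : Matrix (Fin n) (Fin m) ℝ) :
    frobNorm (c • M) = |c| * frobNorm M := by
  have hsum : ∑ i, ∑ j, (c • M) i j ^ 2 = c ^ 2 * ∑ i, ∑ j, M i j ^ 2 := by
    simp only [Matrix.smul_apply, smul_eq_mul, mul_pow, Finset.mul_sum]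
  rw [frobNorm, frobNorm, hsum, Real.sqrt_mul (sq_nonneg c), Real.sqrt_sq_eq_abs]

lemma abs_sum_mul_le_frobNorm_mul {n m : ℕ} (A B : Matrix (Fin n) (Fin m) ℝ) :
    |∑ i, ∑ j, A i j * B i j| ≤ frobNorm A * frobNorm B := by
  calc |∑ i, ∑ j, A i j * B i j| = |∑ p : Fin n × Fin m, A p.1 p.2 * B p.1 p.2| := by
        rw [Fintype.sum_prod_type' fun i j => A i j * B i j]
    _ ≤ Real.sqrt ((∑ p : Fin n × Fin m, A p.1 p.2 ^ 2) * ∑ p : Fin n × Fin m, B p.1 p.2 ^ 2) :=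
        Real.abs_le_sqrt (Finset.sum_mul_sq_le_sq_mul_sq _ _ _)
    _ = frobNorm A * frobNorm B := by
        rw [Real.sqrt_mul (by positivity), Fintype.sum_prod_type' fun i j => A i j ^ 2,
          Fintype.sum_prod_type' fun i j => B i j ^ 2]
        rfl

noncomputable def symOuter {n : ℕ} (u v : Fin n → ℝ) : Matrix (Fin n) (Fin n) ℝ :=
  (2 : ℝ)⁻¹ • (vecMulVec u v + vecMulVec v u)

section symOuter

variable {n : ℕ} (u v : Fin n → ℝ)

lemma symOuter_transpose : (symOuter u v)ᵀ = symOuter u v := by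
  rw [symOuter, transpose_smul, transpose_add, transpose_vecMulVec, transpose_vecMulVec, add_comm]

lemma sum_mul_vecMulVec (E : Matrix (Fin n) (Fin n) ℝ) :
    ∑ i, ∑ j, E i j * vecMulVec u v i j = u ⬝ᵥ E *ᵥ v := by
  simp only [vecMulVec_apply, dotProduct, mulVec, Finset.mul_sum]
  exact Finset.sum_congr rfl fun i _ => Finset.sum_congr rfl fun j _ => by ring

lemma dotProduct_mulVec_comm_of_transpose_eq {E : Matrix (Fin n) (Fin n) ℝ} (hE : Eᵀ = E) :
    u ⬝ᵥ E *ᵥ v = v ⬝ᵥ E *ᵥ u := by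
  rw [dotProduct_mulVec, ← mulVec_transpose, hE, dotProduct_comm]

lemma dotProduct_mulVec_eq_sum_mul_symOuter {E : Matrix (Fin n) (Fin n) ℝ} (hE : Eᵀ = E) :
    u ⬝ᵥ E *ᵥ v = ∑ i, ∑ j, E i j * symOuter u v i j := by
  have hsplit : ∑ i, ∑ j, E i j * symOuter u v i j
      = 2⁻¹ * (∑ i, ∑ j, E i j * vecMulVec u v i j + ∑ i, ∑ j, E i j * vecMulVec v u i j) := by
    simp only [symOuter, Matrix.smul_apply, Matrix.add_apply, smul_eq_mul, Finset.mul_sum,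
      ← Finset.sum_add_distrib]
    exact Finset.sum_congr rfl fun i _ => Finset.sum_congr rfl fun j _ => by ring
  rw [hsplit, sum_mul_vecMulVec, sum_mul_vecMulVec,
    dotProduct_mulVec_comm_of_transpose_eq v u hE]
  ring

lemma abs_dotProduct_mulVec_le {E : Matrix (Fin n) (Fin n) ℝ} (hE : Eᵀ = E) :
    |u ⬝ᵥ E *ᵥ v| ≤ frobNorm E * frobNorm (symOuter u v) := by
  rw [dotProduct_mulVec_eq_sum_mul_symOuter u v hE]
  exact abs_sum_mul_le_frobNorm_mul _ _

lemma frobNorm_symOuter_sq : frobNorm (symOuter u v) ^ 2 = u ⬝ᵥ symOuter u v *ᵥ v := by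
  rw [dotProduct_mulVec_eq_sum_mul_symOuter u v (symOuter_transpose u v), frobNorm_sq]
  simp only [sq]

lemma dotProduct_symOuter_mulVec :
    u ⬝ᵥ symOuter u v *ᵥ v = ((u ⬝ᵥ u) * (v ⬝ᵥ v) + (u ⬝ᵥ v) ^ 2) / 2 := by
  simp only [symOuter, smul_mulVec, add_mulVec, vecMulVec_mulVec, dotProduct_smul,
    dotProduct_add, smul_eq_mul, MulOpposite.smul_eq_mul_unop, MulOpposite.unop_op]
  ring

lemma frobNorm_symOuter (hu : u ≠ 0) (hv : v ≠ 0) :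
    frobNorm (symOuter u v)
      = Real.sqrt ((1 + ((u ⬝ᵥ v) / (e2norm u * e2norm v)) ^ 2) / 2) * (e2norm u * e2norm v) := by
  have hu' := e2norm_pos hu
  have hv' := e2norm_pos hv
  rw [← pow_left_inj₀ (frobNorm_nonneg _) (by positivity) two_ne_zero, frobNorm_symOuter_sq,
    dotProduct_symOuter_mulVec, mul_pow, Real.sq_sqrt (by positivity), ← e2norm_sq,
    ← e2norm_sq]
  field_simp

end symOuter

theorem isGreatest_abs_sum_mul_dotProduct_mulVec {n : ℕ} {ι : Type*} [Fintype ι]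
    (u v : Fin n → ℝ) (f w : ι → ℝ) (hw : ∀ i, 0 ≤ w i) :
    IsGreatest
      {s : ℝ | ∃ E : ι → Matrix (Fin n) (Fin n) ℝ,
        (∀ i, (E i)ᵀ = E i) ∧ (∀ i, frobNorm (E i) ≤ w i) ∧
        s = |∑ i, f i * (u ⬝ᵥ (E i).mulVec v)|}
      ((∑ i, |f i| * w i) * frobNorm (symOuter u v)) := by
  set K := frobNorm (symOuter u v)
  have hK : 0 ≤ K := frobNorm_nonneg _
  refine ⟨⟨fun i => (SignType.sign (f i) * w i / K) • symOuter u v,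
    fun i => ?_, fun i => ?_, ?_⟩, ?_⟩
  · rw [transpose_smul, symOuter_transpose]
  · have hsign : |(SignType.sign (f i) : ℝ)| ≤ 1 := by cases SignType.sign (f i) <;> simp
    rw [frobNorm_smul, abs_div, abs_mul, abs_of_nonneg (hw i), abs_of_nonneg hK]
    rcases hK.eq_or_lt with hK0 | hKpos
    · simp [← hK0, hw i]
    · rw [div_mul_cancel₀ _ hKpos.ne']
      exact mul_le_of_le_one_left (hw i) hsign
  · have hterm : ∀ i, f i * (u ⬝ᵥ ((SignType.sign (f i) * w i / K) • symOuter u v) *ᵥ v)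
        = |f i| * w i * K := fun i => by
      rw [smul_mulVec, dotProduct_smul, smul_eq_mul, ← frobNorm_symOuter_sq, ← self_mul_sign]
      linear_combination (f i * SignType.sign (f i) * w i) * mul_self_div_self K
    simp only [hterm, ← Finset.sum_mul]
    exact (abs_of_nonneg (mul_nonneg (Finset.sum_nonneg fun i _ =>
      mul_nonneg (abs_nonneg _) (hw i)) hK)).symm
  · rintro s ⟨E, hEsymm, hEnorm, rfl⟩
    calc |∑ i, f i * (u ⬝ᵥ E i *ᵥ v)| ≤ ∑ i, |f i| * |u ⬝ᵥ E i *ᵥ v| := by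
          simpa only [abs_mul] using
            Finset.abs_sum_le_sum_abs (fun i => f i * (u ⬝ᵥ E i *ᵥ v)) _
      _ ≤ ∑ i, |f i| * (w i * K) := by
          gcongr with i
          exact (abs_dotProduct_mulVec_le u v (hEsymm i)).trans
            (mul_le_mul_of_nonneg_right (hEnorm i) hK)
      _ = (∑ i, |f i| * w i) * K := by simp only [Finset.sum_mul, mul_assoc]

theorem symmetric_eigenvalue_condition_number_frobenius_general
    {n m : ℕ}
    (u v : Fin n → ℝ) (hu : u ≠ 0) (hv : v ≠ 0)
    (lam : ℝ)
    (f w : Fin m → ℝ) (hw : ∀ i, 0 ≤ w i) :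
    IsGreatest
      {s : ℝ | ∃ E : Fin m → Matrix (Fin n) (Fin n) ℝ,
        (∀ i, (E i)ᵀ = E i) ∧
        (∀ i, frobNorm (E i) ≤ w i) ∧
        s = |∑ i, f i * (u ⬝ᵥ (E i).mulVec v)| / (|lam| * |u ⬝ᵥ v|)}
      (Real.sqrt ((1 + ((u ⬝ᵥ v) / (e2norm u * e2norm v)) ^ 2) / 2) *
        ((∑ i, |f i| * w i) * e2norm u * e2norm v / (|lam| * |u ⬝ᵥ v|))) := by
  have hdiv := (monotone_div_right_of_nonneg (by positivity : 0 ≤ |lam| * |u ⬝ᵥ v|)).map_isGreatest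
    (isGreatest_abs_sum_mul_dotProduct_mulVec u v f w hw)
  refine (congrArg₂ IsGreatest ?_ ?_).mpr hdiv
  · ext s
    constructor
    · rintro ⟨E, hEsymm, hEnorm, rfl⟩
      exact ⟨_, ⟨E, hEsymm, hEnorm, rfl⟩, rfl⟩
    · rintro ⟨_, ⟨E, hEsymm, hEnorm, rfl⟩, rfl⟩
      exact ⟨E, hEsymm, hEnorm, rfl⟩
  · rw [frobNorm_symOuter u v hu hv]
    ring

/-- for symmetric perturbations measured in the Frobenius norm,
the eigenvalue condition number equals `β · κ` with
`β = sqrt((1 + cos²θ)/2)`, `cos θ = uᵀv/(‖u‖‖v‖)`. -/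
theorem symmetric_eigenvalue_condition_number_frobenius
    {n m : ℕ} (hn : 1 ≤ n) (hm : 1 ≤ m)
    (u v : Fin n → ℝ) (hu : u ≠ 0) (hv : v ≠ 0) (huv : u ⬝ᵥ v ≠ 0)
    (lam : ℝ) (hlam : lam ≠ 0)
    (f w : Fin m → ℝ) (hw : ∀ i, 0 ≤ w i) :
    IsGreatest
      {s : ℝ | ∃ E : Fin m → Matrix (Fin n) (Fin n) ℝ,
        (∀ i, (E i)ᵀ = E i) ∧
        (∀ i, frobNorm (E i) ≤ w i) ∧
        s = |∑ i, f i * (u ⬝ᵥ (E i).mulVec v)| / (|lam| * |u ⬝ᵥ v|)}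
      (Real.sqrt ((1 + ((u ⬝ᵥ v) / (e2norm u * e2norm v)) ^ 2) / 2) *
        ((∑ i, |f i| * w i) * e2norm u * e2norm v / (|lam| * |u ⬝ᵥ v|))) :=
  symmetric_eigenvalue_condition_number_frobenius_general u v hu hv lam f w hw
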